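/- arXiv:2101.06767 — 4 statements merged into one kernel-verified Lean document; each statement's English description precedes it below -/
import Mathlib

section
/- Each of the following wedge products with ω∧ω vanishes (componentwise): (e×f)∧ω∧ω = 0, (e×e−f×f)∧ω∧ω = 0, (e×e+f×f)∧ω∧ω = 0, and for all indices i ≠ j the (i,j) entry of [e]∧[f] − [f]∧[e] satisfies ([e]∧[f]−[f]∧[e])ᵢⱼ ∧ ω∧ω = 0. -/
open Matrix

noncomputable section

variable {R : Type*} [CommRing R] {M : Type*} [AddCommGroup M] [Module R M]

/-- `x` is a degree-1 element of the exterior algebra `Λ(M)`, i.e. it lies in the image of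
the canonical inclusion `ι : M → Λ(M)`. -/
def IsDeg1 (x : ExteriorAlgebra R M) : Prop :=
  ∃ m : M, ExteriorAlgebra.ι R m = x

/-- `x` is a degree-2 element of the exterior algebra `Λ(M)`, i.e. an `R`-linear combination
of products of two degree-1 elements. -/
def IsDeg2 (x : ExteriorAlgebra R M) : Prop :=
  x ∈ (LinearMap.range (ExteriorAlgebra.ι R (M := M)) ^ 2 :
    Submodule R (ExteriorAlgebra R M))

/-- For a 3×1 vector `a`, `box a = [a]` is the 3×3 matrix with rows
`(0, a₃, −a₂)`, `(−a₃, 0, a₁)`, `(a₂, −a₁, 0)`. -/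
def box (a : Matrix (Fin 3) (Fin 1) (ExteriorAlgebra R M)) :
    Matrix (Fin 3) (Fin 3) (ExteriorAlgebra R M) :=
  !![0, a 2 0, -(a 1 0); -(a 2 0), 0, a 0 0; a 1 0, -(a 0 0), 0]

/-- The cross product `a × b` of 3×1 vectors over the exterior algebra. -/
def cross (a b : Matrix (Fin 3) (Fin 1) (ExteriorAlgebra R M)) :
    Matrix (Fin 3) (Fin 1) (ExteriorAlgebra R M) :=
  !![a 1 0 * b 2 0 - a 2 0 * b 1 0;
     a 2 0 * b 0 0 - a 0 0 * b 2 0;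
     a 0 0 * b 1 0 - a 1 0 * b 0 0]

/-- `ω = e₁∧f₁ + e₂∧f₂ + e₃∧f₃`. -/
def om (e f : Matrix (Fin 3) (Fin 1) (ExteriorAlgebra R M)) : ExteriorAlgebra R M :=
  e 0 0 * f 0 0 + e 1 0 * f 1 0 + e 2 0 * f 2 0

/-- `ImΩ = f₁∧e₂∧e₃ + f₂∧e₃∧e₁ + f₃∧e₁∧e₂ − f₁∧f₂∧f₃`. -/
def imOm (e f : Matrix (Fin 3) (Fin 1) (ExteriorAlgebra R M)) : ExteriorAlgebra R M :=
  f 0 0 * e 1 0 * e 2 0 + f 1 0 * e 2 0 * e 0 0 + f 2 0 * e 0 0 * e 1 0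
    - f 0 0 * f 1 0 * f 2 0

/-- A 7×7 matrix assembled from blocks of sizes 1, 3, 3. -/
def blk {α : Type*} (P : Matrix (Fin 1) (Fin 1) α) (Q S : Matrix (Fin 1) (Fin 3) α)
    (T : Matrix (Fin 3) (Fin 1) α) (U V : Matrix (Fin 3) (Fin 3) α)
    (W : Matrix (Fin 3) (Fin 1) α) (X Y : Matrix (Fin 3) (Fin 3) α) :
    Matrix (Fin 1 ⊕ (Fin 3 ⊕ Fin 3)) (Fin 1 ⊕ (Fin 3 ⊕ Fin 3)) α :=
  Matrix.fromBlocks P (Matrix.fromCols Q S) (Matrix.fromRows T W)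
    (Matrix.fromBlocks U V X Y)

/-- The 3×3 scalar diagonal matrix `x·I₃`. -/
def dg {α : Type*} [Zero α] (x : α) : Matrix (Fin 3) (Fin 3) α :=
  Matrix.diagonal fun _ => x

/-- The 7×7 block matrix `𝓘 = [[0,0,0],[0,0,−I],[0,I,0]]`. -/
def calI (α : Type*) [Ring α] :
    Matrix (Fin 1 ⊕ (Fin 3 ⊕ Fin 3)) (Fin 1 ⊕ (Fin 3 ⊕ Fin 3)) α :=
  blk 0 0 0 0 0 (-1) 0 1 0

/-- `B = [[0, fᵀ, −eᵀ], [−f, 0, −e₀I], [e, e₀I, 0]]`. -/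
def Bmat (e f : Matrix (Fin 3) (Fin 1) (ExteriorAlgebra R M)) (e0 : ExteriorAlgebra R M) :
    Matrix (Fin 1 ⊕ (Fin 3 ⊕ Fin 3)) (Fin 1 ⊕ (Fin 3 ⊕ Fin 3)) (ExteriorAlgebra R M) :=
  blk 0 (fᵀ) (-(eᵀ)) (-f) 0 (-(dg e0)) e (dg e0) 0

/-- `C = [[0, fᵀ, −eᵀ], [−f, −[e], e₀I+[f]], [e, −e₀I+[f], [e]]]`. -/
def Cmat (e f : Matrix (Fin 3) (Fin 1) (ExteriorAlgebra R M)) (e0 : ExteriorAlgebra R M) :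
    Matrix (Fin 1 ⊕ (Fin 3 ⊕ Fin 3)) (Fin 1 ⊕ (Fin 3 ⊕ Fin 3)) (ExteriorAlgebra R M) :=
  blk 0 (fᵀ) (-(eᵀ)) (-f) (-(box e)) (dg e0 + box f) e (-(dg e0) + box f) (box e)

/-- `F_A = [[0,0,0],[0,α,β],[0,−β,α]]`. -/
def FA (a b : Matrix (Fin 3) (Fin 3) (ExteriorAlgebra R M)) :
    Matrix (Fin 1 ⊕ (Fin 3 ⊕ Fin 3)) (Fin 1 ⊕ (Fin 3 ⊕ Fin 3)) (ExteriorAlgebra R M) :=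
  blk 0 0 0 0 a b 0 (-b) a

/-- `Q₋^δ = e₀ ∧ [[0, (1+δ)eᵀ, (1+δ)fᵀ], [−(1+δ)e, −2δ[f], −2δ[e]], [−(1+δ)f, −2δ[e], 2δ[f]]]`. -/
def Qminus (e f : Matrix (Fin 3) (Fin 1) (ExteriorAlgebra R M)) (e0 : ExteriorAlgebra R M)
    (δ : R) :
    Matrix (Fin 1 ⊕ (Fin 3 ⊕ Fin 3)) (Fin 1 ⊕ (Fin 3 ⊕ Fin 3)) (ExteriorAlgebra R M) :=
  (blk 0 ((1 + δ) • (eᵀ)) ((1 + δ) • (fᵀ))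
      (-((1 + δ) • e)) (-((2 * δ) • box f)) (-((2 * δ) • box e))
      (-((1 + δ) • f)) (-((2 * δ) • box e)) ((2 * δ) • box f)).map fun x => e0 * x

/-- `Q₊^δ`. -/
def Qplus (e f : Matrix (Fin 3) (Fin 1) (ExteriorAlgebra R M)) (δ : R) :
    Matrix (Fin 1 ⊕ (Fin 3 ⊕ Fin 3)) (Fin 1 ⊕ (Fin 3 ⊕ Fin 3)) (ExteriorAlgebra R M) :=
  blk 0 ((2 * δ) • ((cross e f)ᵀ)) (δ • ((cross e e - cross f f)ᵀ))
    (-((2 * δ) • cross e f)) (-((1 + δ) • (f * (fᵀ)))) ((1 + δ) • (f * (eᵀ)))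
    (-(δ • (cross e e - cross f f))) ((1 + δ) • (e * (fᵀ))) (-((1 + δ) • (e * (eᵀ))))

/-- `Q₀`. -/
def Qzero [Algebra ℚ R] (e f : Matrix (Fin 3) (Fin 1) (ExteriorAlgebra R M)) :
    Matrix (Fin 1 ⊕ (Fin 3 ⊕ Fin 3)) (Fin 1 ⊕ (Fin 3 ⊕ Fin 3)) (ExteriorAlgebra R M) :=
  (algebraMap ℚ R (1/2)) •
    blk 0 0 0
      0 (-(box (cross e e + cross f f))) (-((2 : R) • (box e * box f - box f * box e)))
      0 ((2 : R) • (box e * box f - box f * box e)) (-(box (cross e e + cross f f)))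

/-! Degree-1 elements anticommute and square to zero, so each `ωₖ = eₖ ∧ fₖ` is central among
the products of degree-1 elements and `ωₖ ∧ ωₖ = 0`. For `i ≠ j` write `ω = ωᵢ + ωⱼ + ωₖ`: every
term of `ω ∧ ω` then contains `ωᵢ` or `ωⱼ` as a factor, and `x ∧ y ∧ ωᵢ = x ∧ y ∧ ωⱼ = 0` whenever
`x ∈ {eᵢ, fᵢ}` and `y ∈ {eⱼ, fⱼ}`. Every entry in the statement is a combination of such
products `x ∧ y` with `i ≠ j`; for `[a] ∧ [b]` off the diagonal, `([a] ∧ [b])ᵢⱼ = aⱼ ∧ bᵢ`. -/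

namespace IsDeg1

variable {a b c d : ExteriorAlgebra R M}

theorem mul_self_eq_zero (ha : IsDeg1 a) : a * a = 0 := by
  obtain ⟨m, rfl⟩ := ha
  exact ExteriorAlgebra.ι_sq_zero m

theorem mul_comm_eq_neg (ha : IsDeg1 a) (hb : IsDeg1 b) : a * b = -(b * a) := by
  obtain ⟨m, rfl⟩ := ha
  obtain ⟨n, rfl⟩ := hb
  exact eq_neg_of_add_eq_zero_left (ExteriorAlgebra.ι_add_mul_swap m n)

theorem commute_mul (ha : IsDeg1 a) (hb : IsDeg1 b) (hc : IsDeg1 c) : Commute c (a * b) := by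
  calc c * (a * b) = -(a * c) * b := by rw [← mul_assoc, hc.mul_comm_eq_neg ha]
    _ = a * (b * c) := by rw [neg_mul, mul_assoc, hc.mul_comm_eq_neg hb, mul_neg, neg_neg]
    _ = a * b * c := (mul_assoc _ _ _).symm

theorem commute_mul_mul (ha : IsDeg1 a) (hb : IsDeg1 b) (hc : IsDeg1 c) (hd : IsDeg1 d) :
    Commute (a * b) (c * d) :=
  ((commute_mul ha hb hc).symm).mul_right (commute_mul ha hb hd).symm

theorem mul_mul_left_eq_zero (ha : IsDeg1 a) : a * (a * b) = 0 := by
  rw [← mul_assoc, ha.mul_self_eq_zero, zero_mul]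

theorem mul_mul_right_eq_zero (ha : IsDeg1 a) (hb : IsDeg1 b) : b * (a * b) = 0 := by
  rw [(commute_mul ha hb hb).eq, mul_assoc, hb.mul_self_eq_zero, mul_zero]

theorem mul_mul_self_eq_zero (ha : IsDeg1 a) (hb : IsDeg1 b) : a * b * (a * b) = 0 := by
  rw [mul_assoc, mul_mul_right_eq_zero ha hb, mul_zero]

end IsDeg1

theorem mul_mul_add_add_mul_self_eq_zero {A : Type*} [Ring A] {x y a b c : A}
    (hxa : x * a = 0) (hya : Commute y a) (hyb : y * b = 0)
    (hac : Commute a c) (hbc : Commute b c) (hcc : c * c = 0) :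
    x * y * ((a + b + c) * (a + b + c)) = 0 := by
  have hxya : x * y * a = 0 := by rw [mul_assoc, hya.eq, ← mul_assoc, hxa, zero_mul]
  have hxyb : x * y * b = 0 := by rw [mul_assoc, hyb, mul_zero]
  have hsq : (a + b + c) * (a + b + c) = a * (a + b + c + c) + b * (a + b + c + c) :=
    calc (a + b + c) * (a + b + c)
        = a * (a + b + c + c) + b * (a + b + c + c) + (c * a - a * c) + (c * b - b * c)
          + c * c := by noncomm_ring
      _ = a * (a + b + c + c) + b * (a + b + c + c) := by
        rw [hac.eq, hbc.eq, hcc, sub_self, sub_self, add_zero, add_zero, add_zero]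
  rw [hsq, mul_add, ← mul_assoc, ← mul_assoc, hxya, hxyb, zero_mul, add_zero]

theorem exists_om_eq (e f : Matrix (Fin 3) (Fin 1) (ExteriorAlgebra R M)) {i j : Fin 3}
    (hij : i ≠ j) : ∃ k, om e f = e i 0 * f i 0 + e j 0 * f j 0 + e k 0 * f k 0 := by
  fin_cases i <;> fin_cases j <;> simp only [Fin.zero_eta, Fin.mk_one, Fin.reduceFinMk] <;>
    first
      | exact absurd rfl hij
      | (refine ⟨0, ?_⟩; unfold om; abel1)
      | (refine ⟨1, ?_⟩; unfold om; abel1)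
      | (refine ⟨2, ?_⟩; unfold om; abel1)

theorem mul_mul_om_mul_om_eq_zero {e f : Matrix (Fin 3) (Fin 1) (ExteriorAlgebra R M)}
    (he : ∀ i, IsDeg1 (e i 0)) (hf : ∀ i, IsDeg1 (f i 0)) {i j : Fin 3} (hij : i ≠ j)
    {x y : ExteriorAlgebra R M} (hx : x = e i 0 ∨ x = f i 0) (hy : y = e j 0 ∨ y = f j 0) :
    x * y * (om e f * om e f) = 0 := by
  have hy1 : IsDeg1 y := by rcases hy with rfl | rfl; exacts [he j, hf j]
  have hxi : x * (e i 0 * f i 0) = 0 := by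
    rcases hx with rfl | rfl
    exacts [(he i).mul_mul_left_eq_zero, (he i).mul_mul_right_eq_zero (hf i)]
  have hyj : y * (e j 0 * f j 0) = 0 := by
    rcases hy with rfl | rfl
    exacts [(he j).mul_mul_left_eq_zero, (he j).mul_mul_right_eq_zero (hf j)]
  obtain ⟨k, hom⟩ := exists_om_eq e f hij
  rw [hom]
  exact mul_mul_add_add_mul_self_eq_zero hxi ((he i).commute_mul (hf i) hy1) hyj
    ((he i).commute_mul_mul (hf i) (he k) (hf k)) ((he j).commute_mul_mul (hf j) (he k) (hf k))
    ((he k).mul_mul_self_eq_zero (hf k))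

theorem cross_map_mul_eq_zero {a b : Matrix (Fin 3) (Fin 1) (ExteriorAlgebra R M)}
    {w : ExteriorAlgebra R M} (h : ∀ i j, i ≠ j → a i 0 * b j 0 * w = 0) :
    (cross a b).map (· * w) = 0 := by
  ext i k
  fin_cases i <;> fin_cases k <;> simp [cross, sub_mul, h]

theorem box_mul_box_apply_of_ne (a b : Matrix (Fin 3) (Fin 1) (ExteriorAlgebra R M))
    {i j : Fin 3} (hij : i ≠ j) : (box a * box b) i j = a j 0 * b i 0 := by
  fin_cases i <;> fin_cases j <;> simp [box, Matrix.mul_apply, Fin.sum_univ_three] at hij ⊢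

theorem stmt3 (e f : Matrix (Fin 3) (Fin 1) (ExteriorAlgebra R M))
    (he : ∀ i, IsDeg1 (e i 0)) (hf : ∀ i, IsDeg1 (f i 0)) :
    (cross e f).map (fun x => x * (om e f * om e f)) = 0 ∧
    (cross e e - cross f f).map (fun x => x * (om e f * om e f)) = 0 ∧
    (cross e e + cross f f).map (fun x => x * (om e f * om e f)) = 0 ∧
    ∀ i j, i ≠ j → (box e * box f - box f * box e) i j * (om e f * om e f) = 0 := by
  have hω {i j : Fin 3} (hij : i ≠ j) {x y : ExteriorAlgebra R M} :
      (x = e i 0 ∨ x = f i 0) → (y = e j 0 ∨ y = f j 0) → x * y * (om e f * om e f) = 0 :=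
    mul_mul_om_mul_om_eq_zero he hf hij
  have hee : (cross e e).map (· * (om e f * om e f)) = 0 :=
    cross_map_mul_eq_zero fun _ _ hij => hω hij (.inl rfl) (.inl rfl)
  have hff : (cross f f).map (· * (om e f * om e f)) = 0 :=
    cross_map_mul_eq_zero fun _ _ hij => hω hij (.inr rfl) (.inr rfl)
  refine ⟨cross_map_mul_eq_zero fun _ _ hij => hω hij (.inl rfl) (.inr rfl), ?_, ?_,
    fun i j hij => ?_⟩
  · rw [Matrix.map_sub _ (fun a b => sub_mul a b _), hee, hff, sub_zero]
  · rw [Matrix.map_add _ (fun a b => add_mul a b _), hee, hff, add_zero]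
  · rw [Matrix.sub_apply, box_mul_box_apply_of_ne e f hij, box_mul_box_apply_of_ne f e hij, sub_mul,
      hω hij.symm (.inl rfl) (.inr rfl), hω hij.symm (.inr rfl) (.inl rfl), sub_zero]

end
end

section
/- For every δ ∈ R, (B + δC)∧(B + δC) = (1−δ)·Q₋^δ + (1+δ)·Q₊^δ + δ²·Q₀. -/
open Matrix

noncomputable section

variable {R : Type*} [CommRing R] {M : Type*} [AddCommGroup M] [Module R M]

/-
Write `B + δC` in its `1 + 3 + 3` block form and square it blockwise. Since degree-1 elements
square to zero and anticommute, every block of the square collapses by the identities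
`aᵀ[b] = -(a × b)ᵀ`, `[a]b = -(a × b)`, `b × a = a × b`, `aᵀa = 0`, `[a × a] = -2[a]²`,
`[a](e₀I) = -e₀ ∧ [a]` and `(e₀I)² = 0`; what is left is an `R`-linear identity between the
surviving blocks, which is the claimed decomposition.
-/

section BlockMatrix

variable {α : Type*}

theorem blk_mul [NonUnitalNonAssocSemiring α]
    (P P' : Matrix (Fin 1) (Fin 1) α) (Q Q' S S' : Matrix (Fin 1) (Fin 3) α)
    (T T' : Matrix (Fin 3) (Fin 1) α) (U U' V V' : Matrix (Fin 3) (Fin 3) α)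
    (W W' : Matrix (Fin 3) (Fin 1) α) (X X' Y Y' : Matrix (Fin 3) (Fin 3) α) :
    blk P Q S T U V W X Y * blk P' Q' S' T' U' V' W' X' Y' =
      blk (P * P' + Q * T' + S * W') (P * Q' + Q * U' + S * X') (P * S' + Q * V' + S * Y')
        (T * P' + U * T' + V * W') (T * Q' + U * U' + V * X') (T * S' + U * V' + V * Y')
        (W * P' + X * T' + Y * W') (W * Q' + X * U' + Y * X') (W * S' + X * V' + Y * Y') := by
  ext (_ | _ | _) (_ | _ | _) <;>
    simp [blk, mul_apply, Fintype.sum_sum_type, add_assoc]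

theorem blk_add [Add α]
    (P P' : Matrix (Fin 1) (Fin 1) α) (Q Q' S S' : Matrix (Fin 1) (Fin 3) α)
    (T T' : Matrix (Fin 3) (Fin 1) α) (U U' V V' : Matrix (Fin 3) (Fin 3) α)
    (W W' : Matrix (Fin 3) (Fin 1) α) (X X' Y Y' : Matrix (Fin 3) (Fin 3) α) :
    blk P Q S T U V W X Y + blk P' Q' S' T' U' V' W' X' Y' =
      blk (P + P') (Q + Q') (S + S') (T + T') (U + U') (V + V') (W + W') (X + X') (Y + Y') := by
  ext (_ | _ | _) (_ | _ | _) <;> rfl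

theorem smul_blk {β : Type*} [SMul β α] (c : β)
    (P : Matrix (Fin 1) (Fin 1) α) (Q S : Matrix (Fin 1) (Fin 3) α)
    (T : Matrix (Fin 3) (Fin 1) α) (U V : Matrix (Fin 3) (Fin 3) α)
    (W : Matrix (Fin 3) (Fin 1) α) (X Y : Matrix (Fin 3) (Fin 3) α) :
    c • blk P Q S T U V W X Y =
      blk (c • P) (c • Q) (c • S) (c • T) (c • U) (c • V) (c • W) (c • X) (c • Y) := by
  ext (_ | _ | _) (_ | _ | _) <;> rfl

end BlockMatrix

theorem IsDeg1.mul_self_eq_zero_s10 {x : ExteriorAlgebra R M} (hx : IsDeg1 x) : x * x = 0 := by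
  obtain ⟨m, rfl⟩ := hx
  exact ExteriorAlgebra.ι_sq_zero m

theorem IsDeg1.mul_comm_eq_neg_s10 {x y : ExteriorAlgebra R M} (hx : IsDeg1 x) (hy : IsDeg1 y) :
    y * x = -(x * y) := by
  obtain ⟨m, rfl⟩ := hx
  obtain ⟨n, rfl⟩ := hy
  exact eq_neg_of_add_eq_zero_left (ExteriorAlgebra.ι_add_mul_swap n m)

theorem isDeg1_zero : IsDeg1 (0 : ExteriorAlgebra R M) := ⟨0, map_zero _⟩

theorem IsDeg1.neg {x : ExteriorAlgebra R M} (hx : IsDeg1 x) : IsDeg1 (-x) := by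
  obtain ⟨m, rfl⟩ := hx
  exact ⟨-m, map_neg _ m⟩

section BoxCross

variable (a b : Matrix (Fin 3) (Fin 1) (ExteriorAlgebra R M))

theorem transpose_mul_box : aᵀ * box b = -(cross a b)ᵀ := by
  ext i j
  fin_cases i; fin_cases j <;> simp [box, cross, mul_apply, Fin.sum_univ_three] <;> abel

theorem box_mul : box a * b = -cross a b := by
  ext i j
  fin_cases i <;> fin_cases j <;> simp [box, cross, mul_apply, Fin.sum_univ_three] <;> abel

theorem box_add : box (a + b) = box a + box b := by
  ext i j
  fin_cases i <;> fin_cases j <;> simp [box, add_comm]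

variable {a b}

theorem isDeg1_box_apply (ha : ∀ i, IsDeg1 (a i 0)) (i j : Fin 3) : IsDeg1 (box a i j) := by
  fin_cases i <;> fin_cases j <;> simp [box, ha, isDeg1_zero, (ha _).neg]

theorem cross_comm (ha : ∀ i, IsDeg1 (a i 0)) (hb : ∀ i, IsDeg1 (b i 0)) :
    cross b a = cross a b := by
  ext i j
  fin_cases i <;> fin_cases j <;> simp [cross, (ha _).mul_comm_eq_neg_s10 (hb _)] <;> abel

theorem transpose_mul_self (ha : ∀ i, IsDeg1 (a i 0)) : aᵀ * a = 0 := by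
  ext i j
  fin_cases i; fin_cases j
  simp [mul_apply, (ha _).mul_self_eq_zero_s10]

theorem box_cross_self (ha : ∀ i, IsDeg1 (a i 0)) :
    box (cross a a) = -((2 : R) • (box a * box a)) := by
  ext i j
  fin_cases i <;> fin_cases j <;>
    simp [box, cross, (ha _).mul_self_eq_zero_s10, (ha 0).mul_comm_eq_neg_s10 (ha 1),
      (ha 0).mul_comm_eq_neg_s10 (ha 2), (ha 1).mul_comm_eq_neg_s10 (ha 2), two_smul]
  abel

end BoxCross

section ScalarDiagonal

theorem dg_mul {α : Type*} [Semiring α] {n : Type*} (x : α) (A : Matrix (Fin 3) n α) :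
    dg x * A = x • A :=
  (smul_eq_diagonal_mul A x).symm

variable {x : ExteriorAlgebra R M}

theorem mul_dg_of_isDeg1 {m : Type*} {A : Matrix m (Fin 3) (ExteriorAlgebra R M)}
    (hA : ∀ i j, IsDeg1 (A i j)) (hx : IsDeg1 x) : A * dg x = -(x • A) := by
  ext i j
  simp [dg, hx.mul_comm_eq_neg_s10 (hA i j)]

theorem smul_dg_self (hx : IsDeg1 x) : x • dg x = 0 := by
  ext i j
  by_cases h : i = j <;> simp [dg, h, hx.mul_self_eq_zero_s10]

end ScalarDiagonal

theorem Qzero_eq [Algebra ℚ R] {e f : Matrix (Fin 3) (Fin 1) (ExteriorAlgebra R M)}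
    (he : ∀ i, IsDeg1 (e i 0)) (hf : ∀ i, IsDeg1 (f i 0)) :
    Qzero e f = FA (box e * box e + box f * box f) (box f * box e - box e * box f) := by
  have half : algebraMap ℚ R (1 / 2) * 2 = 1 := by
    rw [← map_ofNat (algebraMap ℚ R) 2, ← map_mul]; norm_num
  rw [Qzero, FA, box_add, box_cross_self he, box_cross_self hf, smul_blk]
  congr 1 <;>
    simp only [smul_zero, smul_add, smul_sub, smul_smul, half, one_smul, neg_add, neg_neg,
      neg_sub]

theorem stmt10 [Algebra ℚ R] (e f : Matrix (Fin 3) (Fin 1) (ExteriorAlgebra R M))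
    (e0 : ExteriorAlgebra R M)
    (he : ∀ i, IsDeg1 (e i 0)) (hf : ∀ i, IsDeg1 (f i 0)) (he0 : IsDeg1 e0) :
    ∀ δ : R,
      (Bmat e f e0 + δ • Cmat e f e0) * (Bmat e f e0 + δ • Cmat e f e0)
        = (1 - δ) • Qminus e f e0 δ + (1 + δ) • Qplus e f δ
          + (δ ^ 2) • Qzero e f := by
  intro δ
  have hfe : cross f e = cross e f := cross_comm he hf
  have hbe0 : box e * dg e0 = -(e0 • box e) := mul_dg_of_isDeg1 (isDeg1_box_apply he) he0
  have hbf0 : box f * dg e0 = -(e0 • box f) := mul_dg_of_isDeg1 (isDeg1_box_apply hf) he0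
  have he0T : eᵀ * dg e0 = -(e0 • eᵀ) :=
    mul_dg_of_isDeg1 (fun i j => Fin.fin_one_eq_zero i ▸ he j) he0
  have hf0T : fᵀ * dg e0 = -(e0 • fᵀ) :=
    mul_dg_of_isDeg1 (fun i j => Fin.fin_one_eq_zero i ▸ hf j) he0
  have map_eq_smul : ∀ {m n : Type} (A : Matrix m n (ExteriorAlgebra R M)),
      A.map (e0 * ·) = e0 • A := fun _ => rfl
  rw [Qzero_eq he hf]
  simp only [Bmat, Cmat, Qminus, Qplus, FA, smul_blk, blk_add, blk_mul, map_eq_smul]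
  congr 1
  all_goals
    simp only [Matrix.add_mul, Matrix.mul_add, Matrix.smul_mul, Matrix.mul_smul, Matrix.neg_mul,
      Matrix.mul_neg, Matrix.zero_mul, Matrix.mul_zero, dg_mul, smul_dg_self he0, hbe0, hbf0,
      he0T, hf0T, transpose_mul_box, box_mul, transpose_mul_self he, transpose_mul_self hf, hfe,
      transpose_sub, smul_comm e0, smul_neg, smul_add, smul_zero, smul_sub]
  -- `module` needs a single commutative ring of scalars, so the left multiplications by `e₀`
  -- are turned back into opaque `map`s before the final `R`-linear comparison.
  all_goals simp -failIfUnchanged only [← map_eq_smul]; module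

end
end

section
/- For every δ ∈ R: tr((ω𝓘)∧Q₋^δ + Q₋^δ∧(ω𝓘)) = 0, tr((ω𝓘)∧Q₊^δ + Q₊^δ∧(ω𝓘)) = −4(1+δ)·ω∧ω, and tr((ω𝓘)∧Q₀ + Q₀∧(ω𝓘)) = 16·ω∧ω. Consequently, for every m ∈ R and Q^δ_m := (1−δ+m)·Q₋^δ + (1+δ)·Q₊^δ + δ²·Q₀, one has tr((ω𝓘)∧Q^δ_m + Q^δ_m∧(ω𝓘)) = 4(4δ² − (1+δ)²)·ω∧ω. -/
/-!
Since `ω𝓘` is `ω` times a matrix with entries `0, ±1`, the trace of `ω𝓘 ∧ A + A ∧ ω𝓘` is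
`ω ∧ t + t ∧ ω` with `t = tr(𝓘A) = Σᵢ (A_{eᵢ fᵢ} − A_{fᵢ eᵢ})`. For `Q₋^δ` these entries are
`e₀` times diagonal entries of `[e]` and `[f]`, which vanish. For `Q₊^δ` they give
`−2(1+δ)ω`, and for `Q₀` the commutator `[e][f] − [f][e]` gives `8ω`, since
`tr([e][f]) = −2ω = −tr([f][e])` because `fᵢ ∧ eᵢ = −eᵢ ∧ fᵢ`. The statement for `Q^δ_m`
follows by linearity of `t`.
-/

open Matrix

noncomputable section

variable {R : Type*} [CommRing R] {M : Type*} [AddCommGroup M] [Module R M]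

theorem IsDeg1.mul_anticomm {x y : ExteriorAlgebra R M} (hx : IsDeg1 x) (hy : IsDeg1 y) :
    x * y = -(y * x) := by
  obtain ⟨a, rfl⟩ := hx
  obtain ⟨b, rfl⟩ := hy
  exact eq_neg_of_add_eq_zero_left (ExteriorAlgebra.ι_add_mul_swap a b)

section CalI

variable {α : Type*} [Ring α]

theorem trace_calI_mul (A : Matrix (Fin 1 ⊕ (Fin 3 ⊕ Fin 3)) (Fin 1 ⊕ (Fin 3 ⊕ Fin 3)) α) :
    trace (calI α * A) =
      ∑ i : Fin 3, (A (.inr (.inl i)) (.inr (.inr i)) - A (.inr (.inr i)) (.inr (.inl i))) := by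
  simp only [trace, calI, blk, fromBlocks, fromCols, fromRows_zero, diag_apply, mul_apply, of_apply,
    Fintype.sum_sum_type, Finset.univ_unique, Fin.default_eq_zero, Fin.isValue, Finset.sum_singleton,
    Fin.sum_univ_three, Sum.elim_inl, Matrix.zero_apply, zero_mul, Sum.elim_inr, add_zero,
    Finset.sum_const_zero, zero_add, Matrix.neg_apply, neg_mul, one_apply_eq, one_mul, ne_eq,
    zero_ne_one, not_false_eq_true, one_apply_ne, neg_zero, Fin.reduceEq, one_ne_zero,
    Finset.sum_sub_distrib]
  abel

theorem trace_map_calI_mul_add (w : α)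
    (A : Matrix (Fin 1 ⊕ (Fin 3 ⊕ Fin 3)) (Fin 1 ⊕ (Fin 3 ⊕ Fin 3)) α) :
    trace ((calI α).map (w * ·) * A + A * (calI α).map (w * ·)) =
      w * trace (calI α * A) + trace (calI α * A) * w := by
  rw [trace_calI_mul]
  simp only [trace, calI, blk, fromBlocks, fromCols, fromRows_zero, diag_apply, Matrix.add_apply,
    mul_apply, map_apply, of_apply, Fintype.sum_sum_type, Finset.univ_unique, Fin.default_eq_zero,
    Fin.isValue, Finset.sum_singleton, Fin.sum_univ_three, Sum.elim_inl, Sum.elim_inr,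
    Matrix.zero_apply, mul_zero, zero_mul, add_zero, Finset.sum_const_zero, zero_add,
    Matrix.neg_apply, mul_neg, neg_mul, one_apply_eq, mul_one, ne_eq, zero_ne_one,
    not_false_eq_true, one_apply_ne, neg_zero, Fin.reduceEq, one_ne_zero, Finset.sum_sub_distrib,
    mul_sub, mul_add, sub_mul, add_mul]
  abel

end CalI

section Exterior

variable (e f : Matrix (Fin 3) (Fin 1) (ExteriorAlgebra R M))

theorem trace_calI_mul_Qminus (e0 : ExteriorAlgebra R M) (δ : R) :
    trace (calI _ * Qminus e f e0 δ) = 0 := by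
  simp [trace_calI_mul, Qminus, blk, box]

variable {e f}

theorem trace_calI_mul_Qplus (hfe : ∀ i, f i 0 * e i 0 = -(e i 0 * f i 0)) (δ : R) :
    trace (calI _ * Qplus e f δ) = (-(2 * (1 + δ))) • om e f := by
  simp only [Qplus, blk, transpose_sub, trace_calI_mul, fromBlocks_apply₂₂, fromBlocks_apply₁₂,
    Matrix.smul_apply, mul_apply, Finset.univ_unique, Fin.default_eq_zero, Fin.isValue,
    transpose_apply, Finset.sum_singleton, hfe, smul_neg, fromBlocks_apply₂₁,
    Finset.sum_sub_distrib, Finset.sum_neg_distrib, Fin.sum_univ_three, neg_add_rev, om, smul_add,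
    neg_smul]
  module

theorem trace_calI_mul_Qzero [Algebra ℚ R] (hfe : ∀ i, f i 0 * e i 0 = -(e i 0 * f i 0)) :
    trace (calI _ * Qzero e f) = (8 : R) • om e f := by
  have half : (2 : R) * algebraMap ℚ R 2⁻¹ = 1 := by
    rw [← map_ofNat (algebraMap ℚ R) 2, ← map_mul]
    norm_num
  simp only [Qzero, one_div, blk, fromCols_zero, fromRows_zero, box, Fin.isValue, Matrix.add_apply,
    neg_add_rev, neg_of, neg_cons, neg_zero, neg_neg, neg_empty, cons_mul, Nat.succ_eq_add_one,
    Nat.reduceAdd, vecMul_cons, head_cons, zero_smul, tail_cons, smul_cons, smul_eq_mul, mul_neg,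
    mul_zero, smul_empty, neg_smul, empty_vecMul, add_zero, add_cons, zero_add, empty_add_empty,
    empty_mul, Equiv.symm_apply_apply, hfe, of_sub_of, sub_cons, sub_self, zero_empty, smul_of,
    Algebra.mul_smul_comm, trace_smul, trace_calI_mul, fromBlocks_apply₂₂, fromBlocks_apply₁₂,
    of_apply, cons_val', cons_val_fin_one, fromBlocks_apply₂₁, Finset.sum_sub_distrib,
    Fin.sum_univ_three, cons_val_zero, cons_val_one, cons_val, om, smul_add]
  match_scalars <;> linear_combination 8 * half

end Exterior

theorem stmt13_general [Algebra ℚ R] (e f : Matrix (Fin 3) (Fin 1) (ExteriorAlgebra R M))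
    (e0 : ExteriorAlgebra R M)
    (he : ∀ i, IsDeg1 (e i 0)) (hf : ∀ i, IsDeg1 (f i 0)) :
    ∀ δ m : R,
      Matrix.trace
        (((calI (ExteriorAlgebra R M)).map fun x => om e f * x) * Qminus e f e0 δ
          + Qminus e f e0 δ * ((calI (ExteriorAlgebra R M)).map fun x => om e f * x)) = 0 ∧
      Matrix.trace
        (((calI (ExteriorAlgebra R M)).map fun x => om e f * x) * Qplus e f δ
          + Qplus e f δ * ((calI (ExteriorAlgebra R M)).map fun x => om e f * x))
        = (-(4 * (1 + δ))) • (om e f * om e f) ∧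
      Matrix.trace
        (((calI (ExteriorAlgebra R M)).map fun x => om e f * x) * Qzero e f
          + Qzero e f * ((calI (ExteriorAlgebra R M)).map fun x => om e f * x))
        = (16 : R) • (om e f * om e f) ∧
      Matrix.trace
        (((calI (ExteriorAlgebra R M)).map fun x => om e f * x)
            * ((1 - δ + m) • Qminus e f e0 δ + (1 + δ) • Qplus e f δ + δ ^ 2 • Qzero e f)
          + ((1 - δ + m) • Qminus e f e0 δ + (1 + δ) • Qplus e f δ + δ ^ 2 • Qzero e f)
            * ((calI (ExteriorAlgebra R M)).map fun x => om e f * x))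
        = (4 * (4 * δ ^ 2 - (1 + δ) ^ 2)) • (om e f * om e f) := by
  intro δ m
  have hfe : ∀ i, f i 0 * e i 0 = -(e i 0 * f i 0) := fun i => (hf i).mul_anticomm (he i)
  simp only [trace_map_calI_mul_add]
  simp only [Matrix.mul_add, Matrix.mul_smul, trace_add, trace_smul,
    trace_calI_mul_Qminus, trace_calI_mul_Qplus hfe, trace_calI_mul_Qzero hfe]
  refine ⟨by simp, ?_, ?_, ?_⟩ <;>
    simp only [mul_add, add_mul, mul_smul_comm, smul_mul_assoc, smul_zero,
      mul_zero, zero_mul] <;> module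

theorem stmt13 [Algebra ℚ R] (e f : Matrix (Fin 3) (Fin 1) (ExteriorAlgebra R M))
    (e0 : ExteriorAlgebra R M)
    (he : ∀ i, IsDeg1 (e i 0)) (hf : ∀ i, IsDeg1 (f i 0)) (he0 : IsDeg1 e0) :
    ∀ δ m : R,
      Matrix.trace
        (((calI (ExteriorAlgebra R M)).map fun x => om e f * x) * Qminus e f e0 δ
          + Qminus e f e0 δ * ((calI (ExteriorAlgebra R M)).map fun x => om e f * x)) = 0 ∧
      Matrix.trace
        (((calI (ExteriorAlgebra R M)).map fun x => om e f * x) * Qplus e f δ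
          + Qplus e f δ * ((calI (ExteriorAlgebra R M)).map fun x => om e f * x))
        = (-(4 * (1 + δ))) • (om e f * om e f) ∧
      Matrix.trace
        (((calI (ExteriorAlgebra R M)).map fun x => om e f * x) * Qzero e f
          + Qzero e f * ((calI (ExteriorAlgebra R M)).map fun x => om e f * x))
        = (16 : R) • (om e f * om e f) ∧
      Matrix.trace
        (((calI (ExteriorAlgebra R M)).map fun x => om e f * x)
            * ((1 - δ + m) • Qminus e f e0 δ + (1 + δ) • Qplus e f δ + δ ^ 2 • Qzero e f)
          + ((1 - δ + m) • Qminus e f e0 δ + (1 + δ) • Qplus e f δ + δ ^ 2 • Qzero e f)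
            * ((calI (ExteriorAlgebra R M)).map fun x => om e f * x))
        = (4 * (4 * δ ^ 2 - (1 + δ) ^ 2)) • (om e f * om e f) :=
  stmt13_general e f e0 he hf

end
end

section
/- For every δ ∈ R: tr(F_A∧Q₋^δ + Q₋^δ∧F_A) = 0 and tr(F_A∧Q₊^δ + Q₊^δ∧F_A) = 0. -/
/-!
The entries of `F_A` have degree 2, hence are central in `Λ(M)`; so `tr (Q * F_A) = tr (F_A * Q)`
and it suffices that one of the two traces vanishes. Only the lower 6×6 blocks contribute. For
`Q₋ = e₀ ∧ N`, the lower block of `N` has the shape `[[U, V], [V, -U]]` while that of `F_A` is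
`[[α, β], [-β, α]]`, and the trace of such a product cancels identically. For `Q₊`,
`tr (F_A * Q₊) = -(1 + δ) (tr ((α f - β e) fᵀ) + tr ((α e + β f) eᵀ))`, which vanishes by the two
linear constraints on `α` and `β`.
-/

open Matrix

noncomputable section

variable {R : Type*} [CommRing R] {M : Type*} [AddCommGroup M] [Module R M]

theorem Matrix.trace_mul_comm_of_commute {m n α : Type*} [Fintype m] [Fintype n]
    [NonUnitalNonAssocSemiring α] (A : Matrix m n α) (B : Matrix n m α)
    (h : ∀ i j, Commute (A i j) (B j i)) : trace (A * B) = trace (B * A) := by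
  simp only [trace, diag, mul_apply]
  rw [Finset.sum_comm]
  exact Finset.sum_congr rfl fun j _ => Finset.sum_congr rfl fun i _ => h i j

theorem Matrix.trace_fromBlocks {l m α : Type*} [Fintype l] [Fintype m] [AddCommMonoid α]
    (A : Matrix l l α) (B : Matrix l m α) (C : Matrix m l α) (D : Matrix m m α) :
    trace (fromBlocks A B C D) = trace A + trace D := by
  simp [trace, Fintype.sum_sum_type]

theorem IsDeg2.commute_ι {x : ExteriorAlgebra R M} (hx : IsDeg2 x) (m : M) :
    Commute x (ExteriorAlgebra.ι R m) := by
  rw [IsDeg2, sq] at hx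
  refine Submodule.mul_induction_on hx ?_ fun a b ha hb => ha.add_left hb
  rintro _ ⟨p, rfl⟩ _ ⟨q, rfl⟩
  have anticomm : ∀ u v : M, ExteriorAlgebra.ι R u * ExteriorAlgebra.ι R v =
      -(ExteriorAlgebra.ι R v * ExteriorAlgebra.ι R u) :=
    fun u v => eq_neg_of_add_eq_zero_left (ExteriorAlgebra.ι_add_mul_swap u v)
  simp only [Commute, SemiconjBy, mul_assoc, anticomm q m, mul_neg]
  simp only [← mul_assoc, anticomm p m, neg_mul, neg_neg]

theorem IsDeg2.commute {x : ExteriorAlgebra R M} (hx : IsDeg2 x) (y : ExteriorAlgebra R M) :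
    Commute x y := by
  induction y using ExteriorAlgebra.induction with
  | algebraMap r => exact (Algebra.commutes r x).symm
  | ι m => exact hx.commute_ι m
  | mul a b ha hb => exact ha.mul_right hb
  | add a b ha hb => exact ha.add_right hb

section Blocks

variable {A : Type*} [Ring A] (α β : Matrix (Fin 3) (Fin 3) A)
  (P : Matrix (Fin 1) (Fin 1) A) (Q S : Matrix (Fin 1) (Fin 3) A) (T : Matrix (Fin 3) (Fin 1) A)
  (U V : Matrix (Fin 3) (Fin 3) A) (W : Matrix (Fin 3) (Fin 1) A) (X Y : Matrix (Fin 3) (Fin 3) A)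

theorem trace_FA_mul_blk :
    trace (blk 0 0 0 0 α β 0 (-β) α * blk P Q S T U V W X Y) =
      trace (α * U + β * X) + trace (-β * V + α * Y) := by
  simp [blk, fromBlocks_multiply, Matrix.trace_fromBlocks, fromRows_zero, fromCols_zero]

theorem trace_blk_mul_FA :
    trace (blk P Q S T U V W X Y * blk 0 0 0 0 α β 0 (-β) α) =
      trace (U * α + V * -β) + trace (X * β + Y * α) := by
  simp [blk, fromBlocks_multiply, Matrix.trace_fromBlocks, fromRows_zero, fromCols_zero]

end Blocks

section

variable (e f : Matrix (Fin 3) (Fin 1) (ExteriorAlgebra R M)) (e0 : ExteriorAlgebra R M) (δ : R)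
  (α β : Matrix (Fin 3) (Fin 3) (ExteriorAlgebra R M))

theorem trace_Qminus_mul_FA : trace (Qminus e f e0 δ * FA α β) = 0 := by
  have hQ : Qminus e f e0 δ = e0 • blk 0 ((1 + δ) • (eᵀ)) ((1 + δ) • (fᵀ))
      (-((1 + δ) • e)) (-((2 * δ) • box f)) (-((2 * δ) • box e))
      (-((1 + δ) • f)) (-((2 * δ) • box e)) ((2 * δ) • box f) := rfl
  rw [hQ, Matrix.smul_mul, trace_smul, FA, trace_blk_mul_FA]
  simp only [Matrix.neg_mul, Matrix.smul_mul, Matrix.mul_neg, trace_add, trace_neg, trace_smul]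
  convert smul_zero e0 using 2
  abel

theorem trace_FA_mul_Qplus (h1 : α * e + β * f = 0) (h2 : α * f - β * e = 0) :
    trace (FA α β * Qplus e f δ) = 0 := by
  calc trace (FA α β * Qplus e f δ)
      = -(1 + δ) • (trace ((α * f - β * e) * fᵀ) + trace ((α * e + β * f) * eᵀ)) := by
        rw [FA, Qplus, trace_FA_mul_blk]
        simp only [Matrix.neg_mul, Matrix.mul_smul, Matrix.mul_neg, Matrix.sub_mul, Matrix.add_mul,
          Matrix.mul_assoc, trace_add, trace_sub, trace_neg, trace_smul]
        module
    _ = 0 := by rw [h1, h2]; simp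

end

theorem stmt14_general (e f : Matrix (Fin 3) (Fin 1) (ExteriorAlgebra R M))
    (e0 : ExteriorAlgebra R M)
    (α β : Matrix (Fin 3) (Fin 3) (ExteriorAlgebra R M))
    (hα : ∀ i j, IsDeg2 (α i j)) (hβ : ∀ i j, IsDeg2 (β i j))
    (h1 : α * e + β * f = 0) (h2 : α * f - β * e = 0) :
    ∀ δ : R,
      Matrix.trace (FA α β * Qminus e f e0 δ + Qminus e f e0 δ * FA α β) = 0 ∧
      Matrix.trace (FA α β * Qplus e f δ + Qplus e f δ * FA α β) = 0 := by
  intro δ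
  have central : ∀ i j y, Commute (FA α β i j) y := by
    rintro (i | i | i) (j | j | j) y <;>
      simp [FA, blk, (hα _ _).commute, (hβ _ _).commute]
  refine ⟨?_, ?_⟩
  · rw [trace_add, trace_mul_comm_of_commute _ _ fun i j => central i j _,
      trace_Qminus_mul_FA, add_zero]
  · rw [trace_add, ← trace_mul_comm_of_commute _ _ fun i j => central i j _,
      trace_FA_mul_Qplus e f δ α β h1 h2, add_zero]

theorem stmt14 [Algebra ℚ R] (e f : Matrix (Fin 3) (Fin 1) (ExteriorAlgebra R M))
    (e0 : ExteriorAlgebra R M)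
    (he : ∀ i, IsDeg1 (e i 0)) (hf : ∀ i, IsDeg1 (f i 0)) (he0 : IsDeg1 e0)
    (α β : Matrix (Fin 3) (Fin 3) (ExteriorAlgebra R M))
    (hα : ∀ i j, IsDeg2 (α i j)) (hβ : ∀ i j, IsDeg2 (β i j))
    (hαt : αᵀ = -α) (hβt : βᵀ = β) (hβtr : Matrix.trace β = 0)
    (h1 : α * e + β * f = 0) (h2 : α * f - β * e = 0) :
    ∀ δ : R,
      Matrix.trace (FA α β * Qminus e f e0 δ + Qminus e f e0 δ * FA α β) = 0 ∧
      Matrix.trace (FA α β * Qplus e f δ + Qplus e f δ * FA α β) = 0 :=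
  stmt14_general e f e0 α β hα hβ h1 h2

end
end
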